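/- Let ν_t⁰, ν_t¹, ν_s⁰, ν_s¹, ν_t, ν_s be probability measures with finite first moments on a metric space (Z, d_Z), f : Z → Y be L_f-Lipschitz, and o : Y → ℝ be L_o-Lipschitz. With Δ_ts = W₁(ν_t, ν_s), δ_t^g = W₁(ν_t^g, ν_t), δ_s^g = W₁(ν_s^g, ν_s), it holds that |E_{ν_t⁰}[o ∘ f] − E_{ν_t¹}[o ∘ f]| ≤ L_o · L_f · (W₁(ν_s⁰, ν_s¹) + δ_t⁰ + δ_t¹ + δ_s⁰ + δ_s¹ + 2·Δ_ts). -/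

import Mathlib

open MeasureTheory
open scoped NNReal ENNReal

/-- The Wasserstein-1 (Kantorovich) distance between two measures on a metric
space, defined as the infimum of `∫ d(x,y) dπ` over all couplings `π`. -/
noncomputable def W1 {Z : Type*} [MetricSpace Z] [MeasurableSpace Z]
    (μ ν : Measure Z) : ℝ≥0∞ :=
  ⨅ π ∈ {π : Measure (Z × Z) | π.map Prod.fst = μ ∧ π.map Prod.snd = ν},
    ∫⁻ p, edist p.1 p.2 ∂π

/-- `μ` has a finite first moment (about some base point). -/
def FiniteFirstMoment {Z : Type*} [MetricSpace Z] [MeasurableSpace Z]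
    (μ : Measure Z) : Prop :=
  ∃ z₀ : Z, ∫⁻ z, edist z z₀ ∂μ ≠ ∞

/-!
Easy direction of Kantorovich–Rubinstein: integrating `g p.1 - g p.2` against any coupling `π`
of `μ` and `ν` shows `|E_μ g - E_ν g| ≤ K · ∫ d dπ` for `K`-Lipschitz `g`, hence
`|E_μ g - E_ν g| ≤ K · W₁(μ, ν)`, where finite first moments make `W₁` finite. For the
`Lo Lf`-Lipschitz `o ∘ f`, the triangle inequality through `νt` already bounds the gap by
`Lo Lf (δ_t⁰ + δ_t¹)`; the other terms of the bound are nonnegative.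
-/

namespace FiniteFirstMoment

variable {Z : Type*} [MetricSpace Z] [MeasurableSpace Z] {μ : Measure Z}

theorem lintegral_edist_ne_top [IsFiniteMeasure μ] (hμ : FiniteFirstMoment μ) (z₁ : Z) :
    ∫⁻ z, edist z z₁ ∂μ ≠ ∞ := by
  obtain ⟨z₀, h₀⟩ := hμ
  refine ne_top_of_le_ne_top ?_ (lintegral_mono fun z ↦ edist_triangle z z₀ z₁)
  rw [lintegral_add_right _ measurable_const, lintegral_const]
  exact ENNReal.add_ne_top.2 ⟨h₀, ENNReal.mul_ne_top (edist_ne_top _ _) (measure_ne_top _ _)⟩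

theorem integrable_of_lipschitzWith [OpensMeasurableSpace Z] [IsFiniteMeasure μ]
    (hμ : FiniteFirstMoment μ) {K : ℝ≥0} {g : Z → ℝ} (hg : LipschitzWith K g) :
    Integrable g μ := by
  obtain ⟨z₀, -⟩ := id hμ
  refine ⟨hg.continuous.aestronglyMeasurable, ?_⟩
  have hbound : ∀ z, ‖g z‖ₑ ≤ K * edist z z₀ + ‖g z₀‖ₑ := fun z ↦ calc
    ‖g z‖ₑ ≤ ‖g z - g z₀‖ₑ + ‖g z₀‖ₑ := by simpa using enorm_add_le (g z - g z₀) (g z₀)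
    _ = edist (g z) (g z₀) + ‖g z₀‖ₑ := by rw [edist_eq_enorm_sub]
    _ ≤ K * edist z z₀ + ‖g z₀‖ₑ := by gcongr; exact hg.edist_le_mul z z₀
  refine (lintegral_mono hbound).trans_lt ?_
  rw [lintegral_add_right _ measurable_const, lintegral_const_mul' _ _ ENNReal.coe_ne_top,
    lintegral_const]
  exact ENNReal.add_lt_top.2 ⟨ENNReal.mul_lt_top ENNReal.coe_lt_top
    (hμ.lintegral_edist_ne_top z₀).lt_top, ENNReal.mul_lt_top enorm_lt_top (measure_lt_top _ _)⟩

end FiniteFirstMoment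

section Wasserstein

variable {Z : Type*} [MetricSpace Z] [MeasurableSpace Z] {μ ν : Measure Z}

theorem le_mul_W1_of_forall_coupling {c : ℝ≥0∞} (K : ℝ≥0)
    (h : ∀ π : Measure (Z × Z), π.map Prod.fst = μ → π.map Prod.snd = ν →
      c ≤ K * ∫⁻ p, edist p.1 p.2 ∂π)
    (hne : ∃ π : Measure (Z × Z), π.map Prod.fst = μ ∧ π.map Prod.snd = ν) :
    c ≤ K * W1 μ ν := by
  -- `K * ·` commutes with the infimum only for `K ≠ 0`; for `K = 0` one coupling suffices.
  rcases eq_or_ne K 0 with rfl | hK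
  · obtain ⟨π, h₁, h₂⟩ := hne
    simpa using h π h₁ h₂
  · have hK' : (K : ℝ≥0∞) ≠ 0 := by exact_mod_cast hK
    simp only [W1, ENNReal.mul_iInf_of_ne hK' ENNReal.coe_ne_top]
    exact le_iInf₂ fun π hπ ↦ h π hπ.1 hπ.2

variable [OpensMeasurableSpace Z]

theorem W1_ne_top [IsProbabilityMeasure μ] [IsProbabilityMeasure ν]
    (hμ : FiniteFirstMoment μ) (hν : FiniteFirstMoment ν) : W1 μ ν ≠ ∞ := by
  obtain ⟨z₀, -⟩ := id hμ
  have hfst : (μ.prod ν).map Prod.fst = μ := by simp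
  have hsnd : (μ.prod ν).map Prod.snd = ν := by simp
  have hcost : ∫⁻ p, edist p.1 p.2 ∂(μ.prod ν)
      ≤ ∫⁻ z, edist z z₀ ∂μ + ∫⁻ z, edist z z₀ ∂ν := calc
    _ ≤ ∫⁻ p, edist p.1 z₀ + edist p.2 z₀ ∂(μ.prod ν) := lintegral_mono fun p ↦ by
        simpa only [edist_comm z₀] using edist_triangle p.1 z₀ p.2
    _ = ∫⁻ z, edist z z₀ ∂μ + ∫⁻ z, edist z z₀ ∂ν := by
        rw [lintegral_add_left (by fun_prop),
          ← lintegral_map (f := fun z ↦ edist z z₀) (by fun_prop) measurable_fst,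
          ← lintegral_map (f := fun z ↦ edist z z₀) (by fun_prop) measurable_snd, hfst, hsnd]
  have hW : W1 μ ν ≤ ∫⁻ p, edist p.1 p.2 ∂(μ.prod ν) := biInf_le _ ⟨hfst, hsnd⟩
  refine ne_top_of_le_ne_top ?_ (hW.trans hcost)
  exact ENNReal.add_ne_top.2 ⟨hμ.lintegral_edist_ne_top z₀, hν.lintegral_edist_ne_top z₀⟩

theorem enorm_integral_sub_le_of_coupling {π : Measure (Z × Z)} (h₁ : π.map Prod.fst = μ)
    (h₂ : π.map Prod.snd = ν) {K : ℝ≥0} {g : Z → ℝ} (hg : LipschitzWith K g)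
    (hgμ : Integrable g μ) (hgν : Integrable g ν) :
    ‖∫ z, g z ∂μ - ∫ z, g z ∂ν‖ₑ ≤ K * ∫⁻ p, edist p.1 p.2 ∂π := by
  subst h₁ h₂
  rw [integral_map measurable_fst.aemeasurable hg.continuous.aestronglyMeasurable,
    integral_map measurable_snd.aemeasurable hg.continuous.aestronglyMeasurable,
    ← integral_sub (f := fun p : Z × Z ↦ g p.1) (g := fun p ↦ g p.2)
      (hgμ.comp_measurable measurable_fst) (hgν.comp_measurable measurable_snd)]
  calc ‖∫ p, g p.1 - g p.2 ∂π‖ₑ ≤ ∫⁻ p, ‖g p.1 - g p.2‖ₑ ∂π := enorm_integral_le_lintegral_enorm _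
    _ ≤ ∫⁻ p, K * edist p.1 p.2 ∂π := lintegral_mono fun p ↦ by
        rw [← edist_eq_enorm_sub]
        exact hg.edist_le_mul p.1 p.2
    _ = K * ∫⁻ p, edist p.1 p.2 ∂π := lintegral_const_mul' _ _ ENNReal.coe_ne_top

theorem abs_integral_sub_le_mul_W1 [IsProbabilityMeasure μ] [IsProbabilityMeasure ν]
    (hμ : FiniteFirstMoment μ) (hν : FiniteFirstMoment ν) {K : ℝ≥0} {g : Z → ℝ}
    (hg : LipschitzWith K g) :
    |∫ z, g z ∂μ - ∫ z, g z ∂ν| ≤ K * (W1 μ ν).toReal := by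
  have h := le_mul_W1_of_forall_coupling K
    (fun π h₁ h₂ ↦ enorm_integral_sub_le_of_coupling h₁ h₂ hg
      (hμ.integrable_of_lipschitzWith hg) (hν.integrable_of_lipschitzWith hg))
    ⟨μ.prod ν, by simp, by simp⟩
  simpa using ENNReal.toReal_mono (ENNReal.mul_ne_top ENNReal.coe_ne_top (W1_ne_top hμ hν)) h

end Wasserstein

theorem ugf_upper_bound_general {Z Y : Type*} [MetricSpace Z] [MeasurableSpace Z]
    [OpensMeasurableSpace Z] [MetricSpace Y]
    (νt₀ νt₁ νs₀ νs₁ νt νs : Measure Z)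
    [IsProbabilityMeasure νt₀] [IsProbabilityMeasure νt₁]
    [IsProbabilityMeasure νt]
    (ht₀ : FiniteFirstMoment νt₀) (ht₁ : FiniteFirstMoment νt₁)
    (ht : FiniteFirstMoment νt)
    (Lf Lo : ℝ≥0) (f : Z → Y) (o : Y → ℝ)
    (hf : LipschitzWith Lf f) (ho : LipschitzWith Lo o) :
    |∫ z, o (f z) ∂νt₀ - ∫ z, o (f z) ∂νt₁|
      ≤ Lo * Lf * ((W1 νs₀ νs₁).toReal
          + (W1 νt₀ νt).toReal + (W1 νt₁ νt).toReal
          + (W1 νs₀ νs).toReal + (W1 νs₁ νs).toReal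
          + 2 * (W1 νt νs).toReal) := by
  have hg : LipschitzWith (Lo * Lf) (fun z ↦ o (f z)) := ho.comp hf
  have h₀ := abs_integral_sub_le_mul_W1 ht₀ ht hg
  have h₁ := abs_integral_sub_le_mul_W1 ht₁ ht hg
  push_cast at h₀ h₁
  calc |∫ z, o (f z) ∂νt₀ - ∫ z, o (f z) ∂νt₁|
      ≤ |∫ z, o (f z) ∂νt₀ - ∫ z, o (f z) ∂νt| + |∫ z, o (f z) ∂νt₁ - ∫ z, o (f z) ∂νt| := by
        rw [abs_sub_comm (∫ z, o (f z) ∂νt₁)]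
        exact abs_sub_le _ _ _
    _ ≤ Lo * Lf * ((W1 νt₀ νt).toReal + (W1 νt₁ νt).toReal) := by linarith
    _ ≤ _ := by
        refine mul_le_mul_of_nonneg_left ?_ (by positivity)
        linarith [ENNReal.toReal_nonneg (a := W1 νs₀ νs₁), ENNReal.toReal_nonneg (a := W1 νs₀ νs),
          ENNReal.toReal_nonneg (a := W1 νs₁ νs), ENNReal.toReal_nonneg (a := W1 νt νs)]

/-- the target-domain group gap for `o ∘ f` is bounded by
`L_o L_f (W₁(νs⁰,νs¹) + δ_t⁰ + δ_t¹ + δ_s⁰ + δ_s¹ + 2 Δ_ts)`. -/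
theorem ugf_upper_bound {Z Y : Type*} [MetricSpace Z] [MeasurableSpace Z]
    [OpensMeasurableSpace Z] [MetricSpace Y]
    (νt₀ νt₁ νs₀ νs₁ νt νs : Measure Z)
    [IsProbabilityMeasure νt₀] [IsProbabilityMeasure νt₁]
    [IsProbabilityMeasure νs₀] [IsProbabilityMeasure νs₁]
    [IsProbabilityMeasure νt] [IsProbabilityMeasure νs]
    (ht₀ : FiniteFirstMoment νt₀) (ht₁ : FiniteFirstMoment νt₁)
    (hs₀ : FiniteFirstMoment νs₀) (hs₁ : FiniteFirstMoment νs₁)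
    (ht : FiniteFirstMoment νt) (hs : FiniteFirstMoment νs)
    (Lf Lo : ℝ≥0) (f : Z → Y) (o : Y → ℝ)
    (hf : LipschitzWith Lf f) (ho : LipschitzWith Lo o) :
    |∫ z, o (f z) ∂νt₀ - ∫ z, o (f z) ∂νt₁|
      ≤ Lo * Lf * ((W1 νs₀ νs₁).toReal
          + (W1 νt₀ νt).toReal + (W1 νt₁ νt).toReal
          + (W1 νs₀ νs).toReal + (W1 νs₁ νs).toReal
          + 2 * (W1 νt νs).toReal) :=
  ugf_upper_bound_general νt₀ νt₁ νs₀ νs₁ νt νs ht₀ ht₁ ht Lf Lo f o hf ho
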